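/- Let ψ ∈ ℂ^{2^N} be a nonzero state on N qubits and let i ∈ {1,…,N}. Then the stabilizer group of T_i ψ has cardinality at least half that of ψ: |G_S(T_i ψ)| ≥ |G_S(ψ)| / 2. In particular, applying a single T gate decreases the stabilizer dimension by at most one. -/

import Mathlib

open Matrix
open scoped ComplexOrder

/-- The four Pauli matrices. -/
noncomputable def pauli : Fin 4 → Matrix (Fin 2) (Fin 2) ℂ
  | 0 => 1
  | 1 => !![0, 1; 1, 0]
  | 2 => !![0, -Complex.I; Complex.I, 0]
  | 3 => !![1, 0; 0, -1]

/-- The Pauli string `σ^{α 0} ⊗ ⋯ ⊗ σ^{α (N-1)}` as a `2^N × 2^N` matrix,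
indexed by computational-basis labels `Fin N → Fin 2`. -/
noncomputable def pauliString {N : ℕ} (α : Fin N → Fin 4) :
    Matrix (Fin N → Fin 2) (Fin N → Fin 2) ℂ :=
  fun s s' => ∏ j, pauli (α j) (s j) (s' j)

/-- The stabilizer group of `ψ`: the Pauli strings of which `ψ` is a `±1` eigenvector. -/
def stabGroup {N : ℕ} (ψ : (Fin N → Fin 2) → ℂ) :
    Set (Matrix (Fin N → Fin 2) (Fin N → Fin 2) ℂ) :=
  {σ | (∃ α : Fin N → Fin 4, σ = pauliString α) ∧ (σ *ᵥ ψ = ψ ∨ σ *ᵥ ψ = -ψ)}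

/-- A unitary `U` is Clifford if it maps every Pauli string to a Pauli string up to a
phase `c ∈ {1, -1, i, -i}` under conjugation. -/
def IsClifford {N : ℕ} (U : Matrix (Fin N → Fin 2) (Fin N → Fin 2) ℂ) : Prop :=
  U ∈ Matrix.unitaryGroup (Fin N → Fin 2) ℂ ∧
  ∀ α : Fin N → Fin 4, ∃ (β : Fin N → Fin 4) (c : ℂ),
    (c = 1 ∨ c = -1 ∨ c = Complex.I ∨ c = -Complex.I) ∧
    U * pauliString α * Uᴴ = c • pauliString β

/-- The T gate acting on qubit `i`: `I^{⊗(i-1)} ⊗ diag(1, e^{iπ/4}) ⊗ I^{⊗(N-i)}`. -/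
noncomputable def Tgate {N : ℕ} (i : Fin N) :
    Matrix (Fin N → Fin 2) (Fin N → Fin 2) ℂ :=
  Matrix.diagonal fun s => if s i = 1 then Complex.exp (Complex.I * Real.pi / 4) else 1

/-- The state `|0⟩^{⊗N}`. -/
def zeroState (N : ℕ) : (Fin N → Fin 2) → ℂ :=
  fun s => if s = fun _ => 0 then 1 else 0

def mulP (a b : Fin 4) : Fin 4 :=
  ![![0,1,2,3],![1,0,3,2],![2,3,0,1],![3,2,1,0]] a b

noncomputable def phaseP (a b : Fin 4) : ℂ :=
  ![![1,1,1,1],![1,1,Complex.I,-Complex.I],![1,-Complex.I,1,Complex.I],![1,Complex.I,-Complex.I,1]] a b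

theorem pauli_mul (a b : Fin 4) : pauli a * pauli b = phaseP a b • pauli (mulP a b) := by
  fin_cases a <;> fin_cases b <;>
    simp [pauli, mulP, phaseP, Matrix.vecHead, Matrix.vecTail] <;>
    ext i j <;> fin_cases i <;> fin_cases j <;>
    simp [Matrix.mul_apply, Fin.sum_univ_two, Matrix.one_apply, Matrix.vecHead, Matrix.vecTail,
      Complex.ext_iff]

theorem phaseP_self (a : Fin 4) : phaseP a a = 1 := by
  fin_cases a <;> simp [phaseP, Matrix.vecHead, Matrix.vecTail]

theorem phaseP_ne_zero (a b : Fin 4) : phaseP a b ≠ 0 := by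
  fin_cases a <;> fin_cases b <;>
    simp [phaseP, Matrix.vecHead, Matrix.vecTail, Complex.I_ne_zero]

theorem mulP_self : ∀ a : Fin 4, mulP a a = 0 := by decide

theorem mulP_eq_zero : ∀ a b : Fin 4, mulP a b = 0 → a = b := by decide

theorem mulP_right_cancel : ∀ a a' b : Fin 4, mulP a b = mulP a' b → a = a' := by decide

theorem mulP_notZ : ∀ a b : Fin 4, ¬(a = 0 ∨ a = 3) → ¬(b = 0 ∨ b = 3) →
    (mulP a b = 0 ∨ mulP a b = 3) := by decide

theorem pauliString_mul {N : ℕ} (α β : Fin N → Fin 4) :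
    pauliString α * pauliString β =
      (∏ j, phaseP (α j) (β j)) • pauliString (fun j => mulP (α j) (β j)) := by
  ext s s'
  calc (pauliString α * pauliString β) s s'
      = ∑ t : Fin N → Fin 2, ∏ j, pauli (α j) (s j) (t j) * pauli (β j) (t j) (s' j) := by
        simp [Matrix.mul_apply, pauliString, Finset.prod_mul_distrib]
    _ = ∏ j, ∑ t : Fin 2, pauli (α j) (s j) t * pauli (β j) t (s' j) :=
        (Fintype.prod_sum (κ := fun _ : Fin N => Fin 2)
          (fun j t => pauli (α j) (s j) t * pauli (β j) t (s' j))).symm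
    _ = ∏ j, (pauli (α j) * pauli (β j)) (s j) (s' j) := by simp [Matrix.mul_apply]
    _ = ∏ j, phaseP (α j) (β j) * pauli (mulP (α j) (β j)) (s j) (s' j) := by
        simp_rw [pauli_mul]; simp
    _ = ((∏ j, phaseP (α j) (β j)) • pauliString fun j => mulP (α j) (β j)) s s' := by
        simp [pauliString, Finset.prod_mul_distrib]

theorem pauliString_zero {N : ℕ} : pauliString (fun _ : Fin N => (0 : Fin 4)) = 1 := by
  ext s s'
  by_cases h : s = s'
  · subst h; simp [pauliString, pauli, Matrix.one_apply]
  · have : ∃ j, s j ≠ s' j := by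
      by_contra hc; push_neg at hc; exact h (funext hc)
    obtain ⟨j, hj⟩ := this
    rw [pauliString, Matrix.one_apply_ne h]
    exact Finset.prod_eq_zero (Finset.mem_univ j) (by simp [pauli, Matrix.one_apply, hj])

theorem pauliString_sq {N : ℕ} (α : Fin N → Fin 4) :
    pauliString α * pauliString α = 1 := by
  rw [pauliString_mul]
  simp [phaseP_self, mulP_self, pauliString_zero]

theorem trace_pauliString {N : ℕ} (γ : Fin N → Fin 4) :
    Matrix.trace (pauliString γ) = ∏ j, Matrix.trace (pauli (γ j)) := by
  simp only [Matrix.trace, Matrix.diag, pauliString]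
  exact (Fintype.prod_sum (κ := fun _ : Fin N => Fin 2)
    (fun j t => pauli (γ j) t t)).symm

theorem trace_pauliString_ne {N : ℕ} (γ : Fin N → Fin 4) (h : γ ≠ fun _ => 0) :
    Matrix.trace (pauliString γ) = 0 := by
  obtain ⟨j, hj⟩ : ∃ j, γ j ≠ 0 := by
    by_contra hc; push_neg at hc; exact h (funext hc)
  rw [trace_pauliString]
  refine Finset.prod_eq_zero (Finset.mem_univ j) ?_
  revert hj; generalize γ j = a; intro ha
  fin_cases a <;> simp_all [pauli, Matrix.trace, Matrix.diag, Fin.sum_univ_two,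
    Matrix.vecHead, Matrix.vecTail]

theorem trace_one_pow {N : ℕ} :
    Matrix.trace (1 : Matrix (Fin N → Fin 2) (Fin N → Fin 2) ℂ) = (2 : ℂ) ^ N := by
  rw [Matrix.trace_one]
  simp [Fintype.card_fun]

theorem pauliString_injective {N : ℕ} :
    Function.Injective (pauliString (N := N)) := by
  intro α β h
  by_contra hne
  have hγ : (fun j => mulP (α j) (β j)) ≠ fun _ => (0 : Fin 4) := by
    intro hc
    exact hne (funext fun j => mulP_eq_zero _ _ (congrFun hc j))
  have h1 : Matrix.trace (pauliString α * pauliString β) = (2 : ℂ) ^ N := by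
    rw [h, pauliString_sq, trace_one_pow]
  rw [pauliString_mul, Matrix.trace_smul, trace_pauliString_ne _ hγ] at h1
  simp at h1
  exact (pow_ne_zero N two_ne_zero) h1.symm

theorem pauliString_ne_neg {N : ℕ} (α β : Fin N → Fin 4) :
    pauliString α ≠ -pauliString β := by
  intro h
  have h1 : Matrix.trace (pauliString α * pauliString β) = -((2 : ℂ) ^ N) := by
    rw [h, neg_mul, pauliString_sq, Matrix.trace_neg, trace_one_pow]
  by_cases hab : α = β
  · subst hab
    rw [pauliString_sq, trace_one_pow] at h1
    have h2 : (2 : ℂ) ^ N = 0 := by linear_combination h1 / 2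
    exact (pow_ne_zero N two_ne_zero) h2
  · have hγ : (fun j => mulP (α j) (β j)) ≠ fun _ => (0 : Fin 4) := by
      intro hc
      exact hab (funext fun j => mulP_eq_zero _ _ (congrFun hc j))
    rw [pauliString_mul, Matrix.trace_smul, trace_pauliString_ne _ hγ, smul_zero] at h1
    exact (pow_ne_zero N two_ne_zero) (neg_eq_zero.mp h1.symm)

theorem smul_cancel {N : ℕ} {ψ : (Fin N → Fin 2) → ℂ} (hψ : ψ ≠ 0) {a b : ℂ}
    (h : a • ψ = b • ψ) : a = b := by
  have : (a - b) • ψ = 0 := by rw [sub_smul, h, sub_self]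
  rcases smul_eq_zero.mp this with h' | h'
  · exact sub_eq_zero.mp h'
  · exact absurd h' hψ

theorem pauli_diag_entry : ∀ (a : Fin 4) (x y : Fin 2), (a = 0 ∨ a = 3) →
    pauli a x y ≠ 0 → x = y := by
  intro a x y ha h
  fin_cases a <;> fin_cases x <;> fin_cases y <;>
    simp_all [pauli, Matrix.one_apply, Matrix.vecHead, Matrix.vecTail]

theorem Tgate_comm {N : ℕ} (i : Fin N) (α : Fin N → Fin 4) (hi : α i = 0 ∨ α i = 3) :
    Tgate i * pauliString α = pauliString α * Tgate i := by
  ext s s'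
  rw [Tgate, Matrix.diagonal_mul, Matrix.mul_diagonal]
  by_cases hP : pauliString α s s' = 0
  · rw [hP]; ring
  · have hfac : pauli (α i) (s i) (s' i) ≠ 0 := by
      intro h0
      exact hP (Finset.prod_eq_zero (Finset.mem_univ i) h0)
    have : s i = s' i := pauli_diag_entry _ _ _ hi hfac
    rw [this]; ring

/-- Applying a single T gate at qubit `i` at most halves the size of the
stabilizer group: `|G_S(T_i ψ)| ≥ |G_S(ψ)| / 2` (equivalently, the stabilizer dimension
decreases by at most one). -/
theorem stabGroup_card_Tgate {N : ℕ} (ψ : (Fin N → Fin 2) → ℂ) (hψ : ψ ≠ 0)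
    (i : Fin N) :
    Nat.card (stabGroup ψ) ≤ 2 * Nat.card (stabGroup (Tgate i *ᵥ ψ)) := by
  classical
  set φ := Tgate i *ᵥ ψ with hφ
  set A : Set (Fin N → Fin 4) :=
    {α | pauliString α *ᵥ ψ = ψ ∨ pauliString α *ᵥ ψ = -ψ} with hA
  set B : Set (Fin N → Fin 4) :=
    {α | pauliString α *ᵥ φ = φ ∨ pauliString α *ᵥ φ = -φ} with hB
  have hSA : stabGroup ψ = pauliString '' A := by
    ext σ; constructor
    · rintro ⟨⟨α, rfl⟩, hc⟩; exact ⟨α, hc, rfl⟩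
    · rintro ⟨α, hc, rfl⟩; exact ⟨⟨α, rfl⟩, hc⟩
  have hSB : stabGroup φ = pauliString '' B := by
    ext σ; constructor
    · rintro ⟨⟨α, rfl⟩, hc⟩; exact ⟨α, hc, rfl⟩
    · rintro ⟨α, hc, rfl⟩; exact ⟨⟨α, rfl⟩, hc⟩
  set A0 : Set (Fin N → Fin 4) := {α ∈ A | α i = 0 ∨ α i = 3} with hA0
  set A1 : Set (Fin N → Fin 4) := {α ∈ A | ¬(α i = 0 ∨ α i = 3)} with hA1
  have heig : ∀ {α : Fin N → Fin 4}, α ∈ A →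
      ∃ u : ℂ, (u = 1 ∨ u = -1) ∧ pauliString α *ᵥ ψ = u • ψ := by
    intro α hα
    rcases hα with h | h
    · exact ⟨1, Or.inl rfl, by simpa using h⟩
    · exact ⟨-1, Or.inr rfl, by simpa using h⟩
  have hA0B : A0 ⊆ B := by
    rintro α ⟨hαA, hi⟩
    have hcomm := Tgate_comm i α hi
    have key : pauliString α *ᵥ φ = Tgate i *ᵥ (pauliString α *ᵥ ψ) := by
      rw [hφ, Matrix.mulVec_mulVec, Matrix.mulVec_mulVec, hcomm]
    rcases hαA with h | h
    · left; rw [key, h]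
    · right; rw [key, h, Matrix.mulVec_neg]
  have hcardA : Nat.card (stabGroup ψ) = A.ncard := by
    rw [hSA, Nat.card_coe_set_eq, Set.ncard_image_of_injective _ pauliString_injective]
  have hcardB : Nat.card (stabGroup φ) = B.ncard := by
    rw [hSB, Nat.card_coe_set_eq, Set.ncard_image_of_injective _ pauliString_injective]
  have hA01 : A = A0 ∪ A1 := by
    ext α
    exact ⟨fun hα => if h : (α i = 0 ∨ α i = 3) then Or.inl ⟨hα, h⟩ else Or.inr ⟨hα, h⟩,
      fun h => h.elim (fun h' => h'.1) (fun h' => h'.1)⟩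
  have hA1le : A1.ncard ≤ A0.ncard := by
    rcases A1.eq_empty_or_nonempty with h | ⟨β, hβA, hβi⟩
    · simp [h]
    · refine Set.ncard_le_ncard_of_injOn (fun α j => mulP (α j) (β j)) ?_ ?_ (Set.toFinite _)
      · rintro α ⟨hαA, hαi⟩
        refine ⟨?_, mulP_notZ _ _ hαi hβi⟩
        obtain ⟨u, hu, hus⟩ := heig hαA
        obtain ⟨v, hv, hvs⟩ := heig hβA
        set γ : Fin N → Fin 4 := fun j => mulP (α j) (β j) with hγ
        set c : ℂ := ∏ j, phaseP (α j) (β j) with hc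
        have hcne : c ≠ 0 := Finset.prod_ne_zero_iff.mpr fun j _ => phaseP_ne_zero _ _
        have h1 : c • (pauliString γ *ᵥ ψ) = (u * v) • ψ := by
          rw [← Matrix.smul_mulVec, ← pauliString_mul, ← Matrix.mulVec_mulVec, hvs,
            Matrix.mulVec_smul, hus, smul_smul, mul_comm]
        set w : ℂ := c⁻¹ * (u * v) with hw
        have h2 : pauliString γ *ᵥ ψ = w • ψ := by
          rw [hw, mul_smul, ← h1, smul_smul, inv_mul_cancel₀ hcne, one_smul]
        have h3 : (w * w) • ψ = (1 : ℂ) • ψ := by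
          rw [one_smul, mul_smul, ← h2, ← Matrix.mulVec_smul, ← h2,
            Matrix.mulVec_mulVec, pauliString_sq, Matrix.one_mulVec]
        have h4 : w = 1 ∨ w = -1 := mul_self_eq_one_iff.mp (smul_cancel hψ h3)
        rcases h4 with h4 | h4
        · left; rw [h2, h4, one_smul]
        · right; rw [h2, h4, neg_smul, one_smul]
      · intro x hx y hy h
        funext j
        exact mulP_right_cancel _ _ _ (congrFun h j)
  have hA0B' : A0.ncard ≤ B.ncard := Set.ncard_le_ncard hA0B (Set.toFinite _)
  calc Nat.card ↥(stabGroup ψ) = A.ncard := hcardA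
    _ ≤ A0.ncard + A1.ncard := by rw [hA01]; exact Set.ncard_union_le _ _
    _ ≤ 2 * A0.ncard := by omega
    _ ≤ 2 * B.ncard := by omega
    _ = 2 * Nat.card ↥(stabGroup φ) := by rw [hcardB]
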